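/- For r ∈ R and i ∈ I, the following are equivalent: (1) (r,i) ∈ rad(E(R,I)); (2) r ∈ rad(R) and jr + ji ∈ rad(I) for all j ∈ I; (3) r ∈ rad(R) and rj + ij ∈ rad(I) for all j ∈ I. In particular, (r,0) ∈ rad(E(R,I)) iff r ∈ rad(R) and rI + Ir ⊆ rad(I), and (0,i) ∈ rad(E(R,I)) iff i ∈ rad(I). -/
import Mathlib


open MulOpposite

/-- The underlying type of the Dorroh (ideal) extension `E(R,I)`. -/
@[ext]
structure Dorroh (R : Type*) (I : Type*) where
  fst : R
  snd : I

/-- `I` is an `R`-rng: a nonunital ring with a compatible `(R,R)`-bimodule structure. -/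
class IsRRng (R I : Type*) [Ring R] [NonUnitalRing I] [Module R I] [Module Rᵐᵒᵖ I] : Prop where
  smul_op_smul : ∀ (r : R) (s : Rᵐᵒᵖ) (x : I), r • s • x = s • r • x
  smul_mul : ∀ (r : R) (x y : I), r • (x * y) = (r • x) * y
  mul_smul_eq : ∀ (r : R) (x y : I), x * (r • y) = (op r • x) * y
  op_smul_mul : ∀ (r : R) (x y : I), op r • (x * y) = x * (op r • y)

namespace Dorroh

variable {R I : Type*} [Ring R] [NonUnitalRing I] [Module R I] [Module Rᵐᵒᵖ I] [IsRRng R I]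

instance : Add (Dorroh R I) := ⟨fun p q => ⟨p.fst + q.fst, p.snd + q.snd⟩⟩
instance : Zero (Dorroh R I) := ⟨⟨0, 0⟩⟩
instance : Neg (Dorroh R I) := ⟨fun p => ⟨-p.fst, -p.snd⟩⟩
instance : Mul (Dorroh R I) :=
  ⟨fun p q => ⟨p.fst * q.fst, op q.fst • p.snd + p.fst • q.snd + p.snd * q.snd⟩⟩
instance : One (Dorroh R I) := ⟨⟨1, 0⟩⟩

set_option linter.unusedSectionVars false

@[simp] theorem add_fst (p q : Dorroh R I) : (p + q).fst = p.fst + q.fst := rfl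
@[simp] theorem add_snd (p q : Dorroh R I) : (p + q).snd = p.snd + q.snd := rfl
@[simp] theorem zero_fst : (0 : Dorroh R I).fst = 0 := rfl
@[simp] theorem zero_snd : (0 : Dorroh R I).snd = 0 := rfl
@[simp] theorem neg_fst (p : Dorroh R I) : (-p).fst = -p.fst := rfl
@[simp] theorem neg_snd (p : Dorroh R I) : (-p).snd = -p.snd := rfl
@[simp] theorem mul_fst (p q : Dorroh R I) : (p * q).fst = p.fst * q.fst := rfl
@[simp] theorem mul_snd (p q : Dorroh R I) :
    (p * q).snd = op q.fst • p.snd + p.fst • q.snd + p.snd * q.snd := rfl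
@[simp] theorem one_fst : (1 : Dorroh R I).fst = 1 := rfl
@[simp] theorem one_snd : (1 : Dorroh R I).snd = 0 := rfl

instance : Ring (Dorroh R I) where
  add_assoc a b c := by ext <;> simp [add_assoc]
  zero_add a := by ext <;> simp
  add_zero a := by ext <;> simp
  add_comm a b := by ext <;> simp [add_comm]
  neg_add_cancel a := by ext <;> simp
  mul_assoc a b c := by
    ext
    · simp [mul_assoc]
    · simp only [mul_snd, mul_fst, smul_add, mul_smul, op_mul, mul_add, add_mul,
        IsRRng.smul_mul, IsRRng.op_smul_mul, IsRRng.smul_op_smul, mul_assoc]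
      rw [← IsRRng.mul_smul_eq]
      abel
  one_mul a := by ext <;> simp
  mul_one a := by ext <;> simp
  left_distrib a b c := by
    ext
    · simp [mul_add]
    · simp [op_add, add_smul, smul_add, mul_add]
      abel
  right_distrib a b c := by
    ext
    · simp [add_mul]
    · simp [op_add, add_smul, smul_add, add_mul]
      abel
  zero_mul a := by ext <;> simp
  mul_zero a := by ext <;> simp
  nsmul := nsmulRec
  zsmul := zsmulRec

theorem mul_def (p q : Dorroh R I) :
    p * q = ⟨p.fst * q.fst, op q.fst • p.snd + p.fst • q.snd + p.snd * q.snd⟩ := rfl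

theorem one_def : (1 : Dorroh R I) = ⟨1, 0⟩ := rfl

theorem add_def (p q : Dorroh R I) : p + q = ⟨p.fst + q.fst, p.snd + q.snd⟩ := rfl

end Dorroh

/-- An `R`-subrng of the `R`-rng `I`: an `(R,R)`-subbimodule closed under multiplication. -/
def IsRSubrng (R : Type*) {I : Type*} [Ring R] [NonUnitalRing I] [Module R I]
    [Module Rᵐᵒᵖ I] (J : Set I) : Prop :=
  (0 : I) ∈ J ∧ (∀ x ∈ J, ∀ y ∈ J, x + y ∈ J) ∧ (∀ x ∈ J, -x ∈ J) ∧
    (∀ x ∈ J, ∀ y ∈ J, x * y ∈ J) ∧ (∀ (r : R), ∀ x ∈ J, r • x ∈ J) ∧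
    (∀ (r : R), ∀ x ∈ J, op r • x ∈ J)

/-- An `R`-ideal of the `R`-rng `I`: an `(R,R)`-subbimodule that is an ideal of `I`. -/
def IsRIdeal (R : Type*) {I : Type*} [Ring R] [NonUnitalRing I] [Module R I]
    [Module Rᵐᵒᵖ I] (J : Set I) : Prop :=
  IsRSubrng R J ∧ ∀ (i : I), ∀ j ∈ J, i * j ∈ J ∧ j * i ∈ J

/-- The annihilator `ann_R(I) = {r : R | rI = Ir = 0}`. -/
def annR (R I : Type*) [Ring R] [NonUnitalRing I] [Module R I] [Module Rᵐᵒᵖ I] : Set R :=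
  {r : R | ∀ x : I, r • x = 0 ∧ op r • x = 0}

/-- An element `x` of a rng is left quasi-regular if `x + k + kx = 0` for some `k`. -/
def IsLQR {I : Type*} [NonUnitalRing I] (x : I) : Prop := ∃ k : I, x + k + k * x = 0

/-- The Jacobson radical of a rng. -/
def rngRad (I : Type*) [NonUnitalRing I] : Set I := {x : I | ∀ j : I, IsLQR (j * x)}

/-- `npowNZ x n = x ^ (n+1)` in a nonunital ring. -/
def npowNZ {I : Type*} [NonUnitalRing I] (x : I) : ℕ → I
  | 0 => x
  | n + 1 => npowNZ x n * x

/-- An element of a rng is nilpotent if some positive power of it is zero. -/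
def IsNilElem {I : Type*} [NonUnitalRing I] (x : I) : Prop := ∃ n : ℕ, npowNZ x n = 0

/-- A subset of a rng is nil if each of its elements is nilpotent. -/
def SetIsNil {I : Type*} [NonUnitalRing I] (S : Set I) : Prop := ∀ x ∈ S, IsNilElem x

/-- A subset of a rng is nilpotent if for some `n` every product of `n+1` of its
elements vanishes. -/
def SetIsNilpotent {I : Type*} [NonUnitalRing I] (S : Set I) : Prop :=
  ∃ n : ℕ, ∀ (x : I) (l : List I), x ∈ S → (∀ y ∈ l, y ∈ S) → l.length = n →
    l.foldl (· * ·) x = 0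

/-- The upper nil radical of a rng: the sum of all of its nil (two-sided) ideals. -/
def upperNil (I : Type*) [NonUnitalRing I] : Set I :=
  ((sSup {J : TwoSidedIdeal I | ∀ x ∈ J, IsNilElem x} : TwoSidedIdeal I) : Set I)

/-- A rng is semiprime if it has no nonzero ideal of square zero. -/
def IsSemiprimeRng (I : Type*) [NonUnitalRing I] : Prop :=
  ∀ J : TwoSidedIdeal I, (∀ x ∈ J, ∀ y ∈ J, x * y = 0) → J = ⊥

/-- A rng is prime if the product of any two nonzero ideals is nonzero. -/
def IsPrimeRng (I : Type*) [NonUnitalRing I] : Prop :=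
  ∀ J K : TwoSidedIdeal I, (∀ x ∈ J, ∀ y ∈ K, x * y = 0) → J = ⊥ ∨ K = ⊥

/-- `ψ : I → R` restricts to an `R`-homomorphism on the subset `J ⊆ I`. -/
def IsRHomOn (R : Type*) {I : Type*} [Ring R] [NonUnitalRing I] [Module R I]
    [Module Rᵐᵒᵖ I] (J : Set I) (ψ : I → R) : Prop :=
  (∀ x ∈ J, ∀ y ∈ J, ψ (x + y) = ψ x + ψ y) ∧
    (∀ x ∈ J, ∀ y ∈ J, ψ (x * y) = ψ x * ψ y) ∧
    (∀ (r : R), ∀ x ∈ J, ψ (r • x) = r * ψ x) ∧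
    (∀ (r : R), ∀ x ∈ J, ψ (op r • x) = ψ x * r)

/-- `φ : I → R` is an `R`-homomorphism. -/
def IsRHom (R : Type*) {I : Type*} [Ring R] [NonUnitalRing I] [Module R I]
    [Module Rᵐᵒᵖ I] (φ : I → R) : Prop :=
  (∀ x y : I, φ (x + y) = φ x + φ y) ∧ (∀ x y : I, φ (x * y) = φ x * φ y) ∧
    (∀ (r : R) (x : I), φ (r • x) = r * φ x) ∧ (∀ (r : R) (x : I), φ (op r • x) = φ x * r)

/-- A two-sided ideal `P` of a ring is prime if `AB ⊆ P` implies `A ⊆ P` or `B ⊆ P`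
for all two-sided ideals `A`, `B`. -/
def TsiPrime {S : Type*} [Ring S] (P : TwoSidedIdeal S) : Prop :=
  ∀ A B : TwoSidedIdeal S, (∀ a ∈ A, ∀ b ∈ B, a * b ∈ P) → A ≤ P ∨ B ≤ P

/-- A two-sided ideal is maximal if it is a maximal proper ideal. -/
def TsiMaximal {S : Type*} [Ring S] (P : TwoSidedIdeal S) : Prop :=
  P ≠ ⊤ ∧ ∀ Q : TwoSidedIdeal S, P ≤ Q → Q = P ∨ Q = ⊤

/-- A two-sided-ideal subset of a ring. -/
def IsTwoSidedIdealSet (R : Type*) [Ring R] (P : Set R) : Prop :=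
  (0 : R) ∈ P ∧ (∀ x ∈ P, ∀ y ∈ P, x + y ∈ P) ∧ (∀ x ∈ P, -x ∈ P) ∧
    (∀ (r : R), ∀ x ∈ P, r * x ∈ P ∧ x * r ∈ P)

/-- A subset `P` of `R` is a prime ideal if it is a two-sided ideal and `AB ⊆ P`
implies `A ⊆ P` or `B ⊆ P` for all two-sided ideals `A, B`. -/
def IsPrimeIdealSet (R : Type*) [Ring R] (P : Set R) : Prop :=
  IsTwoSidedIdealSet R P ∧ ∀ A B : TwoSidedIdeal R,
    (∀ a ∈ A, ∀ b ∈ B, a * b ∈ P) → ((A : Set R) ⊆ P ∨ (B : Set R) ⊆ P)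

/-- A subset `P` of `R` is a semiprime ideal if it is a two-sided ideal and `A² ⊆ P`
implies `A ⊆ P` for all two-sided ideals `A`. -/
def IsSemiprimeIdealSet (R : Type*) [Ring R] (P : Set R) : Prop :=
  IsTwoSidedIdealSet R P ∧ ∀ A : TwoSidedIdeal R,
    (∀ a ∈ A, ∀ b ∈ A, a * b ∈ P) → (A : Set R) ⊆ P

section IdealData

variable (R I : Type*) [Ring R] [NonUnitalRing I] [Module R I] [Module Rᵐᵒᵖ I] [IsRRng R I]

/-- The data describing an ideal of `E(R,I)`: ideals `Z ⊆ A` of `R`, an `R`-subrng `J ⊆ I`,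
and a surjective `R`-homomorphism `φ : J → A/Z` (represented by a set-map `ψ : I → R`
choosing representatives), satisfying conditions (a) `ai - ji ∈ ker φ` and
(b) `ia - ij ∈ ker φ` for all `(a,-j) ∈ K`, `i ∈ I`. -/
def DorrohIdealData (A Z : TwoSidedIdeal R) (J : Set I) (ψ : I → R) : Prop :=
  Z ≤ A ∧ IsRSubrng R J ∧
    (∀ x ∈ J, ∀ y ∈ J, ψ (x + y) - (ψ x + ψ y) ∈ Z) ∧
    (∀ x ∈ J, ∀ y ∈ J, ψ (x * y) - ψ x * ψ y ∈ Z) ∧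
    (∀ (r : R), ∀ x ∈ J, ψ (r • x) - r * ψ x ∈ Z) ∧
    (∀ (r : R), ∀ x ∈ J, ψ (op r • x) - ψ x * r ∈ Z) ∧
    (∀ j ∈ J, ψ j ∈ A) ∧
    (∀ a ∈ A, ∃ j ∈ J, a - ψ j ∈ Z) ∧
    (∀ (a : R), ∀ j ∈ J, a ∈ A → a - ψ j ∈ Z → ∀ i : I,
      (a • i - j * i ∈ J ∧ ψ (a • i - j * i) ∈ Z) ∧
      (op a • i - i * j ∈ J ∧ ψ (op a • i - i * j) ∈ Z))

/-- The subset `K = {(a, -j) : a ∈ A, j ∈ J, a + Z = φ(j)}` of `E(R,I)`. -/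
def DorrohIdealSet (A Z : TwoSidedIdeal R) (J : Set I) (ψ : I → R) : Set (Dorroh R I) :=
  {p : Dorroh R I | p.fst ∈ A ∧ -p.snd ∈ J ∧ p.fst - ψ (-p.snd) ∈ Z}

end IdealData

variable (R I : Type*) [Ring R] [NonUnitalRing I] [Module R I] [Module Rᵐᵒᵖ I] [IsRRng R I]

open MulOpposite


section RadAux

variable {S : Type*} [NonUnitalRing S]

private def cOp (a b : S) : S := a + b + a * b

private lemma cOp_assoc (a b c : S) : cOp (cOp a b) c = cOp a (cOp b c) := by
  simp only [cOp, mul_add, add_mul, mul_assoc]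
  abel

private lemma isLQR_iff_cOp {x : S} : IsLQR x ↔ ∃ k, cOp k x = 0 := by
  unfold IsLQR cOp
  constructor <;> rintro ⟨k, hk⟩ <;> refine ⟨k, ?_⟩ <;> rw [← hk] <;> abel

private lemma isLQR_of_cOp {x : S} (y : S) (h : IsLQR (cOp y x)) : IsLQR x := by
  rw [isLQR_iff_cOp] at h ⊢
  obtain ⟨d, hd⟩ := h
  exact ⟨cOp d y, by rw [cOp_assoc]; exact hd⟩

private lemma isLQR_zero : IsLQR (0 : S) := ⟨0, by simp⟩

private lemma isLQR_swap {a b : S} (h : IsLQR (a * b)) : IsLQR (b * a) := by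
  obtain ⟨c, hc⟩ := h
  refine ⟨-(b * a) - b * c * a, ?_⟩
  have key : b * a + (-(b * a) - b * c * a) + (-(b * a) - b * c * a) * (b * a)
      = -(b * (a * b + c + c * (a * b)) * a) := by
    simp only [mul_add, add_mul, sub_mul, neg_mul, mul_neg, mul_assoc, neg_neg]
    abel
  rw [key, hc]
  simp

private lemma rad_isLQR {x : S} (h : x ∈ rngRad S) : IsLQR x := by
  apply isLQR_of_cOp (-x)
  have e : cOp (-x) x = -x * x := by simp [cOp]
  rw [e]
  exact h (-x)

private lemma rad_zero : (0 : S) ∈ rngRad S := fun j => by simpa using (isLQR_zero (S := S))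

private lemma rad_mul_left {x : S} (j : S) (hx : x ∈ rngRad S) : j * x ∈ rngRad S := by
  intro k
  rw [← mul_assoc]
  exact hx (k * j)

private lemma rad_mul_right {x : S} (hx : x ∈ rngRad S) (j : S) : x * j ∈ rngRad S := by
  intro k
  rw [← mul_assoc]
  apply isLQR_swap
  rw [← mul_assoc]
  exact hx (j * k)

private lemma rad_neg {x : S} (hx : x ∈ rngRad S) : -x ∈ rngRad S := by
  intro k
  have := hx (-k)
  simpa [neg_mul, mul_neg] using this

private lemma rad_add {x y : S} (hx : x ∈ rngRad S) (hy : y ∈ rngRad S) :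
    x + y ∈ rngRad S := by
  intro k
  obtain ⟨c, hc⟩ := isLQR_iff_cOp.mp (hx k)
  apply isLQR_of_cOp c
  have e : cOp c (k * (x + y)) = cOp c (k * x) + (k + c * k) * y := by
    simp only [cOp, mul_add, add_mul, mul_assoc]
    abel
  rw [e, hc, zero_add]
  exact hy (k + c * k)

private lemma isLQR_add_rad {x m : S} (hx : IsLQR x) (hm : m ∈ rngRad S) :
    IsLQR (x + m) := by
  obtain ⟨c, hc⟩ := isLQR_iff_cOp.mp hx
  apply isLQR_of_cOp c
  have e : cOp c (x + m) = cOp c x + (m + c * m) := by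
    simp only [cOp, mul_add]
    abel
  rw [e, hc, zero_add]
  exact rad_isLQR (rad_add hm (rad_mul_left c hm))

private lemma mem_rad_of_forall_mul {x : S} (h : ∀ k : S, k * x ∈ rngRad S) :
    x ∈ rngRad S := fun k => rad_isLQR (h k)

private lemma rad_twoSided {x : S} (hx : x ∈ rngRad S) :
    ∃ b ∈ rngRad S, x + b + b * x = 0 ∧ x + b + x * b = 0 := by
  obtain ⟨b, hb⟩ := rad_isLQR hx
  have hbmem : b ∈ rngRad S := by
    have hb' : b = -(x + b * x) := by
      have h2 : (x + b * x) + b = 0 := by rw [← hb]; abel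
      exact eq_neg_of_add_eq_zero_right h2
    rw [hb']
    exact rad_neg (rad_add hx (rad_mul_left b hx))
  obtain ⟨c, hc⟩ := rad_isLQR hbmem
  have h1 : cOp b x = 0 := by
    rw [show cOp b x = x + b + b * x by simp only [cOp]; abel]
    exact hb
  have h2 : cOp c b = 0 := by
    rw [show cOp c b = b + c + c * b by simp only [cOp]; abel]
    exact hc
  have key : c = x := by
    have k1 : cOp c (cOp b x) = cOp (cOp c b) x := (cOp_assoc c b x).symm
    rw [h1, h2] at k1
    simpa [cOp] using k1
  refine ⟨b, hbmem, hb, ?_⟩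
  rw [key] at hc
  rw [← hc]
  abel

end RadAux

section DorrohRad

variable {R I : Type*} [Ring R] [NonUnitalRing I] [Module R I] [Module Rᵐᵒᵖ I] [IsRRng R I]

private lemma rad_smul {x : I} (hx : x ∈ rngRad I) (c : R) : c • x ∈ rngRad I := by
  intro k
  rw [IsRRng.mul_smul_eq]
  exact hx (op c • k)

private lemma isLQR_op_smul {b : R} {x : I} (h : IsLQR (b • x)) : IsLQR (op b • x) := by
  obtain ⟨c, hc⟩ := h
  refine ⟨-(op b • x) - op b • (x * c), ?_⟩
  have hc' : b • x + c * (b • x) = -c := by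
    have h2 : c + (b • x + c * (b • x)) = 0 := by rw [← hc]; abel
    exact eq_neg_of_add_eq_zero_right h2
  have e1 : (-(op b • x) - op b • (x * c)) * (op b • x)
      = op b • ((-(op b • x) - op b • (x * c)) * x) :=
    (IsRRng.op_smul_mul b _ x).symm
  have e2 : (-(op b • x) - op b • (x * c)) * x = -(x * (b • x + c * (b • x))) := by
    rw [sub_mul, neg_mul, mul_add, ← IsRRng.mul_smul_eq, ← IsRRng.mul_smul_eq, mul_assoc]
    abel
  rw [e1, e2, hc', mul_neg, neg_neg]
  abel

private lemma rad_op_smul {x : I} (hx : x ∈ rngRad I) (c : R) : op c • x ∈ rngRad I := by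
  intro k
  rw [← IsRRng.op_smul_mul]
  exact isLQR_op_smul (rad_isLQR (rad_smul (rad_mul_left k hx) c))

private lemma isLQR_dorroh_snd {x : I} :
    IsLQR (⟨0, x⟩ : Dorroh R I) ↔ IsLQR x := by
  constructor
  · rintro ⟨⟨b, y⟩, hk⟩
    have h1 : (0 : R) + b + b * 0 = 0 := congrArg Dorroh.fst hk
    have h2 : x + y + (op (0 : R) • y + b • x + y * x) = 0 := congrArg Dorroh.snd hk
    have hb : b = 0 := by simpa using h1
    rw [hb] at h2
    refine ⟨y, ?_⟩
    simpa using h2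
  · rintro ⟨k, hk⟩
    refine ⟨⟨0, k⟩, ?_⟩
    ext
    · simp
    · simpa using hk

/-- Condition (2). -/
private def DCond (r : R) (i : I) : Prop :=
  r ∈ rngRad R ∧ ∀ j : I, op r • j + j * i ∈ rngRad I

private lemma DCond.right {r : R} {i : I} (h : DCond r i) (j : I) :
    r • j + i * j ∈ rngRad I := by
  intro k
  have key : k * (r • j + i * j) = (op r • k + k * i) * j := by
    rw [mul_add, IsRRng.mul_smul_eq, add_mul, mul_assoc]
  rw [key]
  exact rad_isLQR (rad_mul_right (h.2 k) j)

private lemma DCond.of_right {r : R} {i : I} (hr : r ∈ rngRad R)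
    (h : ∀ j : I, r • j + i * j ∈ rngRad I) : DCond r i := by
  refine ⟨hr, fun j k => ?_⟩
  apply isLQR_swap
  have key : (op r • j + j * i) * k = j * (r • k + i * k) := by
    rw [add_mul, ← IsRRng.mul_smul_eq, mul_assoc, ← mul_add]
  rw [key]
  exact rad_isLQR (rad_mul_left j (h k))

private lemma DCond.mul {r : R} {i : I} (h : DCond r i) (s : R) (j : I) :
    DCond (s * r) (op r • j + s • i + j * i) := by
  obtain ⟨hr, hu⟩ := h
  refine ⟨fun k => ?_, fun k => ?_⟩
  · have := hr (k * s)
    rwa [mul_assoc] at this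
  · have key : op (s * r) • k + k * (op r • j + s • i + j * i)
        = (op r • (op s • k) + (op s • k) * i) + (op r • (k * j) + (k * j) * i) := by
      have e1 : (op (s * r) • k : I) = op r • (op s • k) := by rw [op_mul, mul_smul]
      have e2 : k * (op r • j) = op r • (k * j) := (IsRRng.op_smul_mul r k j).symm
      have e3 : k * (s • i) = (op s • k) * i := IsRRng.mul_smul_eq s k i
      rw [e1, mul_add, mul_add, e2, e3, ← mul_assoc]
      abel
    rw [key]
    exact rad_add (hu (op s • k)) (hu (k * j))

private lemma DCond.isLQR {r : R} {i : I} (h : DCond r i) :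
    IsLQR (⟨r, i⟩ : Dorroh R I) := by
  obtain ⟨hr, hu⟩ := h
  obtain ⟨b, hbmem, hb1, hb2⟩ := rad_twoSided hr
  -- hb1 : r + b + b * r = 0, hb2 : r + b + r * b = 0
  set w : I := i + b • i with hw
  have hwcond : ∀ j : I, op (-b) • j + j * w ∈ rngRad I := by
    intro j
    have hz : (op r • j : I) + op r • (op b • j) + op b • j = 0 := by
      have e1 : (op r • (op b • j) : I) = op (b * r) • j := by rw [← mul_smul, ← op_mul]
      have e2 : r + b * r + b = 0 := by rw [← hb1]; abel
      rw [e1, show (op r • j : I) + op (b * r) • j + op b • j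
          = op (r + b * r + b) • j by simp [op_add, add_smul], e2]
      simp
    have key : op (-b) • j + j * w = (op r • j + j * i) + (op r • (op b • j) + (op b • j) * i) := by
      rw [hw, mul_add, IsRRng.mul_smul_eq, op_neg, neg_smul]
      rw [show (op r • j + j * i) + (op r • (op b • j) + (op b • j) * i)
          = ((op r • j : I) + op r • (op b • j) + op b • j)
            + (-(op b • j) + (j * i + (op b • j) * i)) by abel, hz, zero_add]
    rw [key]
    exact rad_add (hu j) (hu (op b • j))
  have hrho : (-b) • w + w * w ∈ rngRad I :=
    DCond.right ⟨rad_neg hbmem, hwcond⟩ w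
  have hwlqr : IsLQR w := by
    apply isLQR_of_cOp (-w - r • w)
    have hsm : ((r + b + r * b : R)) • w = 0 := by rw [hb2, zero_smul]
    have hδ : cOp (-w - r • w) w
        = -(((-b) • w + w * w) + r • ((-b) • w + w * w)) := by
      have expand : cOp (-w - r • w) w + ((r + b + r * b : R)) • w
          = -(((-b) • w + w * w) + r • ((-b) • w + w * w)) := by
        simp only [cOp, sub_mul, neg_mul, add_smul, smul_add, smul_neg, neg_smul,
          ← IsRRng.smul_mul, ← mul_smul]
        abel
      have := expand
      rw [hsm, add_zero] at this
      exact this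
    rw [hδ]
    exact rad_isLQR (rad_neg (rad_add hrho (rad_smul hrho r)))
  apply isLQR_of_cOp (⟨b, 0⟩ : Dorroh R I)
  have e : cOp (⟨b, 0⟩ : Dorroh R I) ⟨r, i⟩ = ⟨0, w⟩ := by
    ext
    · show b + r + b * r = 0
      rw [← hb1]; abel
    · show (0 : I) + i + (op r • (0 : I) + b • i + 0 * i) = w
      simp [hw]
  rw [e]
  exact isLQR_dorroh_snd.mpr hwlqr

private lemma DCond.rad {r : R} {i : I} (h : DCond r i) :
    (⟨r, i⟩ : Dorroh R I) ∈ rngRad (Dorroh R I) := by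
  intro p
  have hp : p * (⟨r, i⟩ : Dorroh R I) = ⟨p.fst * r, op r • p.snd + p.fst • i + p.snd * i⟩ := rfl
  rw [hp]
  exact DCond.isLQR (DCond.mul h p.fst p.snd)

private lemma DCond.of_rad {r : R} {i : I}
    (h : (⟨r, i⟩ : Dorroh R I) ∈ rngRad (Dorroh R I)) : DCond r i := by
  constructor
  · intro s
    have hs := h ⟨s, 0⟩
    have hp : (⟨s, 0⟩ : Dorroh R I) * ⟨r, i⟩ = ⟨s * r, s • i⟩ := by
      ext <;> simp
    rw [hp] at hs
    obtain ⟨k, hk⟩ := hs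
    refine ⟨k.fst, ?_⟩
    have := congrArg Dorroh.fst hk
    simpa using this
  · intro j k
    have hs := h ⟨0, k * j⟩
    have hp : (⟨0, k * j⟩ : Dorroh R I) * ⟨r, i⟩ = ⟨0, k * (op r • j + j * i)⟩ := by
      ext
      · simp
      · simp [mul_add, IsRRng.op_smul_mul, mul_assoc]
    rw [hp] at hs
    exact isLQR_dorroh_snd.mp hs

end DorrohRad


/-- `(r,i) ∈ rad(E(R,I))` iff `r ∈ rad(R)` and `jr + ji ∈ rad(I)` for all `j ∈ I`, iff
`r ∈ rad(R)` and `rj + ij ∈ rad(I)` for all `j ∈ I`; in particular `(r,0) ∈ rad(E(R,I))`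
iff `r ∈ rad(R)` and `rI + Ir ⊆ rad(I)`, and `(0,i) ∈ rad(E(R,I))` iff `i ∈ rad(I)`. -/
theorem dorroh_rad_mem_iff (r : R) (i : I) :
    ((⟨r, i⟩ : Dorroh R I) ∈ rngRad (Dorroh R I) ↔
      (r ∈ rngRad R ∧ ∀ j : I, op r • j + j * i ∈ rngRad I)) ∧
    ((⟨r, i⟩ : Dorroh R I) ∈ rngRad (Dorroh R I) ↔
      (r ∈ rngRad R ∧ ∀ j : I, r • j + i * j ∈ rngRad I)) ∧
    ((⟨r, (0 : I)⟩ : Dorroh R I) ∈ rngRad (Dorroh R I) ↔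
      (r ∈ rngRad R ∧ ∀ j : I, r • j ∈ rngRad I ∧ op r • j ∈ rngRad I)) ∧
    ((⟨(0 : R), i⟩ : Dorroh R I) ∈ rngRad (Dorroh R I) ↔ i ∈ rngRad I) := by
  classical
  have main : ∀ (r : R) (i : I),
      (⟨r, i⟩ : Dorroh R I) ∈ rngRad (Dorroh R I) ↔ DCond r i :=
    fun r i => ⟨DCond.of_rad, DCond.rad⟩
  have h2 : (⟨r, i⟩ : Dorroh R I) ∈ rngRad (Dorroh R I) ↔
      (r ∈ rngRad R ∧ ∀ j : I, op r • j + j * i ∈ rngRad I) := main r i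
  have h3 : (⟨r, i⟩ : Dorroh R I) ∈ rngRad (Dorroh R I) ↔
      (r ∈ rngRad R ∧ ∀ j : I, r • j + i * j ∈ rngRad I) := by
    rw [main r i]
    exact ⟨fun h => ⟨h.1, fun j => h.right j⟩, fun h => DCond.of_right h.1 h.2⟩
  refine ⟨h2, h3, ?_, ?_⟩
  · constructor
    · intro h
      have a2 := (main r 0).mp h
      have a3 := DCond.right a2
      refine ⟨a2.1, fun j => ⟨?_, ?_⟩⟩
      · have := a3 j
        simpa using this
      · have := a2.2 j
        simpa using this
    · rintro ⟨hr, hj⟩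
      refine (main r 0).mpr ⟨hr, fun j => ?_⟩
      simpa using (hj j).2
  · constructor
    · intro h
      have a2 := (main 0 i).mp h
      apply mem_rad_of_forall_mul
      intro k
      have := a2.2 k
      simpa using this
    · intro hi
      refine (main 0 i).mpr ⟨rad_zero, fun j => ?_⟩
      simpa using rad_mul_left j hi
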